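/- arXiv:1902.09609 — 4 statements merged into one kernel-verified Lean document; each statement's English description precedes it below -/
import Mathlib

section
/- If n = p₁^{a₁} · … · p_r^{a_r} > 1 is the prime factorization of n, then τ(n) ≥ τ^(e)(n) + (τ(n)/ω(n)) · (1/(a₁+1) + 1/(a₂+1) + … + 1/(a_r+1)). -/
open Finset

/-- The number of exponential divisors of n. -/
def taue (n : ℕ) : ℕ := ∏ p ∈ n.primeFactors, (n.factorization p).divisors.card

/-! Writing `P = ∏ (aᵢ + 1) = τ(n)` and letting `a_q` be the smallest exponent, we have
`τ^(e)(n) ≤ ∏ aᵢ ≤ a_q · P / (a_q + 1)`, while the mean of the `1 / (aᵢ + 1)` is at most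
`1 / (a_q + 1)`; the two bounds add up to `P`. -/

namespace Finset

variable {ι : Type*} [DecidableEq ι] {s : Finset ι} {q : ι}

theorem prod_le_mul_prod_erase_succ (f : ι → ℕ) (hq : q ∈ s) :
    ∏ i ∈ s, f i ≤ f q * ∏ i ∈ s.erase q, (f i + 1) := by
  rw [← mul_prod_erase s f hq]
  gcongr
  exact Nat.le_succ _

theorem prod_succ_div_card_mul_sum_inv_succ_le {f : ι → ℕ} (hq : q ∈ s)
    (hmin : ∀ i ∈ s, f q ≤ f i) :
    (∏ i ∈ s, ((f i : ℚ) + 1)) / #s * ∑ i ∈ s, 1 / ((f i : ℚ) + 1) ≤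
      ∏ i ∈ s.erase q, ((f i : ℚ) + 1) := by
  have hcard : (0 : ℚ) < #s := by exact_mod_cast card_pos.mpr ⟨q, hq⟩
  have hsum : ∑ i ∈ s, 1 / ((f i : ℚ) + 1) ≤ #s * (1 / ((f q : ℚ) + 1)) := by
    rw [← nsmul_eq_mul]
    refine sum_le_card_nsmul _ _ _ fun i hi => ?_
    gcongr
    exact_mod_cast hmin i hi
  calc (∏ i ∈ s, ((f i : ℚ) + 1)) / #s * ∑ i ∈ s, 1 / ((f i : ℚ) + 1)
      ≤ (∏ i ∈ s, ((f i : ℚ) + 1)) / #s * (#s * (1 / ((f q : ℚ) + 1))) := by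
        gcongr
    _ = ∏ i ∈ s.erase q, ((f i : ℚ) + 1) := by
        rw [← mul_prod_erase s _ hq]
        field_simp

theorem prod_add_prod_succ_div_card_mul_sum_inv_succ_le (f : ι → ℕ) (hs : s.Nonempty) :
    ∏ i ∈ s, (f i : ℚ) + (∏ i ∈ s, ((f i : ℚ) + 1)) / #s * ∑ i ∈ s, 1 / ((f i : ℚ) + 1) ≤
      ∏ i ∈ s, ((f i : ℚ) + 1) := by
  obtain ⟨q, hq, hmin⟩ := s.exists_min_image f hs
  have hprod : ∏ i ∈ s, (f i : ℚ) ≤ f q * ∏ i ∈ s.erase q, ((f i : ℚ) + 1) := by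
    exact_mod_cast prod_le_mul_prod_erase_succ f hq
  have hsplit : ∏ i ∈ s, ((f i : ℚ) + 1) =
      f q * ∏ i ∈ s.erase q, ((f i : ℚ) + 1) + ∏ i ∈ s.erase q, ((f i : ℚ) + 1) := by
    rw [← mul_prod_erase s _ hq]
    ring
  linarith [prod_succ_div_card_mul_sum_inv_succ_le hq hmin]

end Finset

theorem taue_le_prod_factorization (n : ℕ) :
    taue n ≤ ∏ p ∈ n.primeFactors, n.factorization p :=
  prod_le_prod' fun _ _ => Nat.card_divisors_le_self _

/-- For n > 1, τ(n) ≥ τ^(e)(n) + (τ(n)/ω(n)) · ∑ 1/(aᵢ+1). -/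
theorem tau_ge_taue_add (n : ℕ) (hn : 1 < n) :
    (n.divisors.card : ℚ) ≥ (taue n : ℚ) +
      (n.divisors.card : ℚ) / (n.primeFactors.card : ℚ) *
        ∑ p ∈ n.primeFactors, (1 : ℚ) / ((n.factorization p : ℚ) + 1) := by
  have htaue : (taue n : ℚ) ≤ ∏ p ∈ n.primeFactors, (n.factorization p : ℚ) := by
    exact_mod_cast taue_le_prod_factorization n
  rw [Nat.card_divisors (by omega)]
  push_cast
  linarith [prod_add_prod_succ_div_card_mul_sum_inv_succ_le (n.factorization)
    (Nat.nonempty_primeFactors.mpr hn)]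
end

section
/- For every integer n ≥ 2 that is a perfect square, 2^{ω(n)} ≤ τ^(e)(n) ≤ 2^{Ω(n)}, where ω(n) is the number of distinct prime factors of n and Ω(n) is the number of prime factors counted with multiplicity. -/
open Finset

open ArithmeticFunction

theorem length_primeFactorsList_eq_sum_factorization (n : ℕ) :
    n.primeFactorsList.length = ∑ p ∈ n.primeFactors, n.factorization p := by
  rw [← cardFactors_apply, cardFactors_eq_sum_factorization, Finsupp.sum,
    Nat.support_factorization]

theorem two_le_card_divisors {a : ℕ} (ha : 2 ≤ a) : 2 ≤ #a.divisors :=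
  calc 2 = #{1, a} := (card_pair (by omega)).symm
    _ ≤ #a.divisors := card_le_card <| insert_subset (Nat.one_mem_divisors.2 (by omega))
      (singleton_subset_iff.2 (Nat.mem_divisors_self a (by omega)))

theorem IsSquare.two_le_factorization {n p : ℕ} (hsq : IsSquare n) (hp : p ∈ n.primeFactors) :
    2 ≤ n.factorization p := by
  obtain ⟨m, rfl⟩ := hsq
  have hpos : 0 < (m * m).factorization p := Nat.pos_of_ne_zero (Finsupp.mem_support_iff.1
    (Nat.support_factorization (m * m) ▸ hp))
  rw [← pow_two, Nat.factorization_pow] at hpos ⊢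
  simp only [Finsupp.smul_apply, smul_eq_mul] at hpos ⊢
  omega

theorem taue_le_two_pow_length_primeFactorsList (n : ℕ) :
    taue n ≤ 2 ^ n.primeFactorsList.length := by
  rw [taue, length_primeFactorsList_eq_sum_factorization, ← prod_pow_eq_pow_sum]
  exact prod_le_prod' fun p _ =>
    (Nat.card_divisors_le_self _).trans (Nat.lt_two_pow_self).le

theorem two_pow_card_primeFactors_le_taue {n : ℕ}
    (h : ∀ p ∈ n.primeFactors, 2 ≤ n.factorization p) :
    2 ^ n.primeFactors.card ≤ taue n := by
  rw [taue, ← prod_const]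
  exact prod_le_prod' fun p hp => two_le_card_divisors (h p hp)

theorem two_pow_omega_le_taue_general (n : ℕ) (hsq : IsSquare n) :
    2 ^ n.primeFactors.card ≤ taue n ∧ taue n ≤ 2 ^ n.primeFactorsList.length :=
  ⟨two_pow_card_primeFactors_le_taue fun _ => hsq.two_le_factorization,
    taue_le_two_pow_length_primeFactorsList n⟩

/-- For every perfect square n ≥ 2, 2^ω(n) ≤ τ^(e)(n) ≤ 2^Ω(n). -/
theorem two_pow_omega_le_taue (n : ℕ) (hn : 2 ≤ n) (hsq : IsSquare n) :
    2 ^ n.primeFactors.card ≤ taue n ∧ taue n ≤ 2 ^ n.primeFactorsList.length :=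
  two_pow_omega_le_taue_general n hsq
end

section
/- For any integer n ≥ 1, τ(n) + 1 ≥ τ^(e)(n) + τ*(n), where τ* counts the unitary divisors of n. -/
/-!
Write `n = ∏ p ^ aₚ` over `k = ω(n)` primes. Then `τ(n) = ∏ (aₚ + 1)` and `τ^(e)(n) = ∏ τ(aₚ)` with
`1 ≤ τ(aₚ) ≤ aₚ`. Expanding `∏ (xᵢ + 1)` over the subsets of the index set gives `∏ xᵢ` plus
`2 ^ k - 1` further products, each at least `1` when all `xᵢ ≥ 1`; apply this to `xₚ = τ(aₚ)`.
-/

open Finset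

theorem Finset.prod_add_two_pow_card_le_prod_add_one_add_one {ι : Type*} (s : Finset ι)
    (x : ι → ℕ) (hx : ∀ i ∈ s, 1 ≤ x i) :
    ∏ i ∈ s, x i + 2 ^ s.card ≤ ∏ i ∈ s, (x i + 1) + 1 := by
  induction s using Finset.cons_induction with
  | empty => simp
  | cons a s _ ih =>
    have hxa : 1 ≤ x a := hx a (mem_cons_self a s)
    have hxs : ∀ i ∈ s, 1 ≤ x i := fun i hi => hx i (mem_cons_of_mem hi)
    have hprod : 1 ≤ ∏ i ∈ s, x i := one_le_prod' hxs
    have hpow : 1 ≤ 2 ^ s.card := Nat.one_le_two_pow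
    rw [prod_cons, prod_cons, card_cons, pow_succ]
    nlinarith [ih hxs, Nat.mul_le_mul hxa hpow]

/-- For n ≥ 1, τ(n) + 1 ≥ τ^(e)(n) + τ*(n), where τ*(n) = 2^ω(n). -/
theorem tau_add_one_ge (n : ℕ) (hn : 1 ≤ n) :
    n.divisors.card + 1 ≥ taue n + 2 ^ n.primeFactors.card := by
  have hn0 : n ≠ 0 := by omega
  have hexp_pos : ∀ p ∈ n.primeFactors, 1 ≤ (n.factorization p).divisors.card := fun p hp =>
    card_pos.mpr (Nat.nonempty_divisors.mpr (Finsupp.mem_support_iff.mp hp))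
  calc taue n + 2 ^ n.primeFactors.card
      ≤ ∏ p ∈ n.primeFactors, ((n.factorization p).divisors.card + 1) + 1 :=
        prod_add_two_pow_card_le_prod_add_one_add_one _ _ hexp_pos
    _ ≤ ∏ p ∈ n.primeFactors, (n.factorization p + 1) + 1 := by
        gcongr with p
        exact Nat.card_divisors_le_self _
    _ = n.divisors.card + 1 := by rw [Nat.card_divisors hn0]
end

section
/- Let e and g be positive integers with e ≥ 2 and let n be odd with e·g dividing n (so e ≥ 3 since e·f·g = n for some positive integer f and n is odd). Then (e+1)^g · e/(e+1) ≥ (τ(e))^g + (e+1)^{g-1}, i.e. e/(e+1) ≥ (τ(e))^g/(e+1)^g + (1/g)·(g/(e+1)). -/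
/-- For e ≥ 2, g ≥ 1, n odd with e·g ∣ n:
(e+1)^g · e/(e+1) ≥ (τ(e))^g + (e+1)^(g-1). -/
theorem key_ineq (e g n : ℕ) (he : 2 ≤ e) (hg : 1 ≤ g) (hodd : Odd n)
    (hdvd : e * g ∣ n) :
    ((e : ℚ) + 1) ^ g * e / (e + 1) ≥
      (e.divisors.card : ℚ) ^ g + ((e : ℚ) + 1) ^ (g - 1) := by
  have hedvd : e ∣ n := dvd_trans ⟨g, rfl⟩ hdvd
  have hoe : Odd e := by
    rcases Nat.even_or_odd e with heven | h
    · exfalso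
      have : Even n := (even_iff_two_dvd.mpr (dvd_trans (even_iff_two_dvd.mp heven) hedvd))
      exact (Nat.not_odd_iff_even.mpr this) hodd
    · exact h
  have he3 : 3 ≤ e := by
    rcases hoe with ⟨m, hm⟩
    omega
  have hτ : e.divisors.card ≤ e - 1 := by
    have hsub : e.divisors ⊆ (Finset.Icc 1 e).erase (e - 1) := by
      intro d hd
      rw [Nat.mem_divisors] at hd
      obtain ⟨hdvd', hne⟩ := hd
      have hd1 : 1 ≤ d := Nat.pos_of_dvd_of_pos hdvd' (by omega)
      have hde : d ≤ e := Nat.le_of_dvd (by omega) hdvd'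
      refine Finset.mem_erase.mpr ⟨?_, Finset.mem_Icc.mpr ⟨hd1, hde⟩⟩
      intro hcontra
      subst hcontra
      have : e - 1 ∣ e - (e - 1) := Nat.dvd_sub hdvd' (dvd_refl _)
      have h1 : e - (e - 1) = 1 := by omega
      rw [h1] at this
      have := Nat.le_of_dvd one_pos this
      omega
    calc e.divisors.card ≤ ((Finset.Icc 1 e).erase (e - 1)).card := Finset.card_le_card hsub
      _ = (Finset.Icc 1 e).card - 1 :=
          Finset.card_erase_of_mem (Finset.mem_Icc.mpr ⟨by omega, by omega⟩)
      _ = e - 1 := by rw [Nat.card_Icc]; omega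
  obtain ⟨k, rfl⟩ : ∃ k, g = k + 1 := ⟨g - 1, by omega⟩
  set T : ℚ := (e.divisors.card : ℚ) with hT
  have hT0 : 0 ≤ T := by positivity
  have hTle : T ≤ (e : ℚ) - 1 := by
    rw [hT]
    have : ((e.divisors.card : ℚ)) ≤ ((e - 1 : ℕ) : ℚ) := by exact_mod_cast hτ
    calc (e.divisors.card : ℚ) ≤ ((e - 1 : ℕ) : ℚ) := this
      _ ≤ (e : ℚ) - 1 := by
        push_cast [Nat.cast_sub (by omega : 1 ≤ e)]
        ring_nf; exact le_refl _
  have hE1 : (0 : ℚ) < (e : ℚ) + 1 := by positivity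
  have hpow : T ^ k ≤ ((e : ℚ) + 1) ^ k := by
    apply pow_le_pow_left₀ hT0
    linarith
  have hpownn : (0 : ℚ) ≤ T ^ k := by positivity
  have hEpow : (0 : ℚ) ≤ ((e : ℚ) + 1) ^ k := by positivity
  have hgoal : T ^ (k + 1) + ((e : ℚ) + 1) ^ k ≤ ((e : ℚ) + 1) ^ k * e := by
    rw [pow_succ]
    nlinarith [mul_le_mul hpow hTle hT0 hEpow]
  have hrw : ((e : ℚ) + 1) ^ (k + 1) * e / ((e : ℚ) + 1) = ((e : ℚ) + 1) ^ k * e := by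
    field_simp
    ring
  rw [ge_iff_le, hrw]
  simpa using hgoal
end
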